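/- arXiv:2203.05234 — 3 statements merged into one kernel-verified Lean document; each statement's English description precedes it below -/
import Mathlib

section
/- For H in (0,1), T > 0 and μ > 0, define Δ(μ) as in the pathwise LSE compensation. Then dΔ/dμ is strictly positive for all μ > 0 if H < 1/2, identically zero if H = 1/2, and strictly negative for all μ > 0 if H > 1/2. -/
/-!
Differentiating `γ(h, μT)` by the fundamental theorem of calculus, the `e^{-μT}` terms coming
from the three summands of `Δ` cancel, leaving
`Δ'(μ) = H (1 - 2H) μ^{-2H-1} (μT γ(2H, μT) - γ(2H+1, μT))`.
The last factor is `∫₀^{μT} e^{-s} s^{2H-1} (μT - s) ds > 0`, so `Δ'` has the sign of `1 - 2H`.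
-/

open Real MeasureTheory intervalIntegral

/-- Lower incomplete gamma function `γ(h, x) = ∫₀ˣ e^{-s} s^{h-1} ds`. -/
noncomputable def lowerGamma (h x : ℝ) : ℝ := ∫ s in (0:ℝ)..x, Real.exp (-s) * s ^ (h - 1)

/-- The compensation term `Δ(μ)` for Hurst parameter `H` and time horizon `T`. -/
noncomputable def Delta (H T μ : ℝ) : ℝ :=
  (1/2) * T ^ (2*H) * (1 - lowerGamma 1 (μ*T))
    - μ ^ (-(2*H)) * lowerGamma (2*H+1) (μ*T) * (H - 1/2)
    + T * H * μ ^ (1-2*H) * lowerGamma (2*H) (μ*T)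

lemma intervalIntegrable_lowerGamma_integrand {h : ℝ} (hh : 0 < h) (x : ℝ) :
    IntervalIntegrable (fun s => exp (-s) * s ^ (h - 1)) volume 0 x :=
  (intervalIntegrable_rpow' (by linarith)).continuousOn_mul
    (continuous_exp.comp continuous_neg).continuousOn

lemma hasDerivAt_lowerGamma {h x : ℝ} (hh : 0 < h) (hx : x ≠ 0) :
    HasDerivAt (lowerGamma h) (exp (-x) * x ^ (h - 1)) x := by
  have hmeas : Measurable fun s : ℝ => exp (-s) * s ^ (h - 1) :=
    (measurable_exp.comp measurable_neg).mul (measurable_id.pow_const _)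
  exact integral_hasDerivAt_right (intervalIntegrable_lowerGamma_integrand hh x)
    hmeas.stronglyMeasurable.stronglyMeasurableAtFilter
    ((continuous_exp.comp continuous_neg).continuousAt.mul
      (continuousAt_rpow_const x (h - 1) (Or.inl hx)))

lemma mul_lowerGamma_sub_lowerGamma_add_one_eq_integral {h : ℝ} (hh : 0 < h) {x : ℝ}
    (hx : 0 ≤ x) :
    x * lowerGamma h x - lowerGamma (h + 1) x
      = ∫ s in (0:ℝ)..x, exp (-s) * s ^ (h - 1) * (x - s) := by
  have hint := intervalIntegrable_lowerGamma_integrand hh x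
  have hint' := intervalIntegrable_lowerGamma_integrand (h := h + 1) (by linarith) x
  rw [lowerGamma, lowerGamma, ← intervalIntegral.integral_const_mul,
    ← integral_sub (hint.const_mul x) hint']
  refine integral_congr fun s hs => ?_
  rw [Set.uIcc_of_le hx] at hs
  simp only [add_sub_cancel_right]
  rw [show h = (h - 1) + 1 by ring, rpow_add_one' hs.1 (by linarith)]
  ring_nf

lemma mul_lowerGamma_sub_lowerGamma_add_one_pos {h x : ℝ} (hh : 0 < h) (hx : 0 < x) :
    0 < x * lowerGamma h x - lowerGamma (h + 1) x := by
  rw [mul_lowerGamma_sub_lowerGamma_add_one_eq_integral hh hx.le]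
  refine intervalIntegral_pos_of_pos_on ?_ (fun s hs => ?_) hx
  · exact (intervalIntegrable_lowerGamma_integrand hh x).mul_continuousOn
      (continuous_const.sub continuous_id).continuousOn
  · have : 0 < s ^ (h - 1) := rpow_pos_of_pos hs.1 _
    have : 0 < x - s := sub_pos.2 hs.2
    positivity

lemma hasDerivAt_lowerGamma_mul_const {h : ℝ} (hh : 0 < h) {T μ : ℝ} (hμT : μ * T ≠ 0) :
    HasDerivAt (fun μ => lowerGamma h (μ * T)) (exp (-(μ * T)) * (μ * T) ^ (h - 1) * T) μ :=
  (hasDerivAt_lowerGamma hh hμT).comp (h := fun μ => μ * T) μ (hasDerivAt_mul_const T)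

lemma hasDerivAt_Delta {H T μ : ℝ} (hH : 0 < H) (hT : 0 < T) (hμ : 0 < μ) :
    HasDerivAt (Delta H T)
      (H * (1 - 2*H) * μ ^ (-(2*H) - 1) *
        (μ * T * lowerGamma (2*H) (μ*T) - lowerGamma (2*H+1) (μ*T))) μ := by
  have hμT : μ * T ≠ 0 := (mul_pos hμ hT).ne'
  have hD := (((hasDerivAt_const μ (1:ℝ)).sub
      (hasDerivAt_lowerGamma_mul_const one_pos hμT)).const_mul ((1/2) * T ^ (2*H))).sub
    (((hasDerivAt_rpow_const (p := -(2*H)) (Or.inl hμ.ne')).mul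
      (hasDerivAt_lowerGamma_mul_const (h := 2*H+1) (by linarith) hμT)).mul_const (H - 1/2))
    |>.add (((hasDerivAt_rpow_const (p := 1-2*H) (Or.inl hμ.ne')).const_mul (T * H)).mul
      (hasDerivAt_lowerGamma_mul_const (h := 2*H) (by linarith) hμT))
  refine (hD.congr_of_eventuallyEq (Filter.Eventually.of_forall fun ν => ?_)).congr_deriv ?_
  · simp only [Delta, Pi.add_apply, Pi.sub_apply, Pi.mul_apply]
  simp only [sub_self, rpow_zero, add_sub_cancel_right, mul_rpow hμ.le hT.le, rpow_sub hμ,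
    rpow_sub hT, rpow_neg hμ.le, rpow_one]
  field_simp
  ring

lemma exists_pos_deriv_Delta_eq {H T μ : ℝ} (hH : 0 < H) (hT : 0 < T) (hμ : 0 < μ) :
    ∃ c > 0, deriv (Delta H T) μ = (1 - 2*H) * c := by
  have hγ := mul_lowerGamma_sub_lowerGamma_add_one_pos (h := 2*H) (by positivity) (mul_pos hμ hT)
  have hpow : 0 < μ ^ (-(2*H) - 1) := rpow_pos_of_pos hμ _
  refine ⟨H * μ ^ (-(2*H) - 1) * (μ * T * lowerGamma (2*H) (μ*T) - lowerGamma (2*H+1) (μ*T)),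
    by positivity, ?_⟩
  rw [(hasDerivAt_Delta hH hT hμ).deriv]
  ring

theorem stmt_2 (H T : ℝ) (hH : H ∈ Set.Ioo (0:ℝ) 1) (hT : 0 < T) :
    (H < 1/2 → ∀ μ > (0:ℝ), 0 < deriv (Delta H T) μ)
    ∧ (H = 1/2 → ∀ μ > (0:ℝ), deriv (Delta H T) μ = 0)
    ∧ (1/2 < H → ∀ μ > (0:ℝ), deriv (Delta H T) μ < 0) := by
  refine ⟨fun hH' μ hμ => ?_, fun hH' μ hμ => ?_, fun hH' μ hμ => ?_⟩ <;>
    obtain ⟨c, hc, hderiv⟩ := exists_pos_deriv_Delta_eq hH.1 hT hμ <;> rw [hderiv]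
  · exact mul_pos (by linarith) hc
  · rw [hH']; ring
  · exact mul_neg_of_neg_of_pos (by linarith) hc
end

section
/- For H in (0,1), T > 0 and μ > 0, the integral ∫₀^{μT} e^{-s} s^{2H-1} (2H μT - (2H+1)s) ds is strictly positive. -/
/-!
Put `f s = s ^ (α - 1) * (α * a - (α + 1) * s)`, the derivative of `s ^ α * (a - s)`, so that
`∫₀^a f = 0`. Since `f` changes sign from positive to negative at `s₀ = α a / (α + 1)` and
`exp (-s) - exp (-s₀)` changes sign the same way, `∫₀^a exp (-s) f s = ∫₀^a (exp (-s) - exp (-s₀)) f s`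
has a positive integrand away from `s₀`.
-/

open Real Set MeasureTheory intervalIntegral

theorem integral_mul_pos_of_integral_eq_zero_of_strictAntiOn {f g : ℝ → ℝ} {a b c : ℝ}
    (hac : a < c) (hcb : c < b) (hf : IntervalIntegrable f volume a b)
    (hg : ContinuousOn g (Icc a b)) (hg_anti : StrictAntiOn g (Icc a b))
    (hf_int : ∫ x in a..b, f x = 0)
    (hf_pos : ∀ x ∈ Ioo a c, 0 < f x) (hf_neg : ∀ x ∈ Ioo c b, f x < 0) :
    0 < ∫ x in a..b, g x * f x := by
  have hab : a ≤ b := (hac.trans hcb).le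
  have hcI : c ∈ Icc a b := ⟨hac.le, hcb.le⟩
  have hint : IntervalIntegrable (fun x => (g x - g c) * f x) volume a b :=
    hf.continuousOn_mul ((hg.sub continuousOn_const).mono (by rw [uIcc_of_le hab]))
  have hshift : ∫ x in a..b, g x * f x = ∫ x in a..b, (g x - g c) * f x := by
    have hgf : IntervalIntegrable (fun x => g x * f x) volume a b :=
      hf.continuousOn_mul (hg.mono (by rw [uIcc_of_le hab]))
    have : (fun x => (g x - g c) * f x) = fun x => g x * f x - g c * f x := by
      funext x; ring
    rw [this, integral_sub hgf (hf.const_mul _), intervalIntegral.integral_const_mul, hf_int,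
      mul_zero, sub_zero]
  have hint_left : IntervalIntegrable (fun x => (g x - g c) * f x) volume a c :=
    hint.mono_set (by rw [uIcc_of_le hac.le, uIcc_of_le hab]; exact Icc_subset_Icc_right hcb.le)
  have hint_right : IntervalIntegrable (fun x => (g x - g c) * f x) volume c b :=
    hint.mono_set (by rw [uIcc_of_le hcb.le, uIcc_of_le hab]; exact Icc_subset_Icc_left hac.le)
  have hleft : 0 < ∫ x in a..c, (g x - g c) * f x := by
    refine intervalIntegral_pos_of_pos_on hint_left (fun x hx => ?_) hac
    have : g c < g x := hg_anti ⟨hx.1.le, (hx.2.trans hcb).le⟩ hcI hx.2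
    exact mul_pos (sub_pos.2 this) (hf_pos x hx)
  have hright : 0 < ∫ x in c..b, (g x - g c) * f x := by
    refine intervalIntegral_pos_of_pos_on hint_right (fun x hx => ?_) hcb
    have : g x < g c := hg_anti hcI ⟨(hac.trans hx.1).le, hx.2.le⟩ hx.1
    exact mul_pos_of_neg_of_neg (sub_neg.2 this) (hf_neg x hx)
  rw [hshift, ← integral_add_adjacent_intervals hint_left hint_right]
  exact add_pos hleft hright

theorem hasDerivAt_rpow_mul_sub {α a s : ℝ} (hs : 0 < s) :
    HasDerivAt (fun x => x ^ α * (a - x)) (s ^ (α - 1) * (α * a - (α + 1) * s)) s := by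
  refine ((hasDerivAt_rpow_const (Or.inl hs.ne')).mul
    ((hasDerivAt_id' s).const_sub a)).congr_deriv ?_
  rw [rpow_sub_one hs.ne']
  field_simp
  ring

theorem integral_rpow_mul_sub_eq_zero {α a : ℝ} (hα : 0 < α) (ha : 0 ≤ a) :
    ∫ s in (0:ℝ)..a, s ^ (α - 1) * (α * a - (α + 1) * s) = 0 := by
  rw [integral_eq_sub_of_hasDerivAt_of_le ha (f := fun x => x ^ α * (a - x))]
  · simp [zero_rpow hα.ne']
  · exact ((continuousOn_id.rpow_const fun _ _ => Or.inr hα.le).mul (continuousOn_const.sub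
      continuousOn_id))
  · exact fun s hs => hasDerivAt_rpow_mul_sub hs.1
  · exact (intervalIntegrable_rpow' (by linarith)).mul_continuousOn (by fun_prop)

theorem integral_exp_neg_mul_rpow_mul_sub_pos {α a : ℝ} (hα : 0 < α) (ha : 0 < a) :
    0 < ∫ s in (0:ℝ)..a, exp (-s) * s ^ (α - 1) * (α * a - (α + 1) * s) := by
  set s₀ := α * a / (α + 1)
  have hα1 : 0 < α + 1 := by linarith
  have hs₀ : (α + 1) * s₀ = α * a := by simp only [s₀]; field_simp
  have hs₀_pos : 0 < s₀ := by positivity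
  simp only [mul_assoc]
  refine integral_mul_pos_of_integral_eq_zero_of_strictAntiOn hs₀_pos
    ?_ ?_ (by fun_prop) ?_ (integral_rpow_mul_sub_eq_zero hα ha.le) ?_ ?_
  · rw [div_lt_iff₀ hα1]; nlinarith
  · exact (intervalIntegrable_rpow' (by linarith)).mul_continuousOn (by fun_prop)
  · exact fun x _ y _ hxy => exp_lt_exp.2 (neg_lt_neg hxy)
  · exact fun s hs => mul_pos (rpow_pos_of_pos hs.1 _) (by nlinarith [hs.2])
  · exact fun s hs =>
      mul_neg_of_pos_of_neg (rpow_pos_of_pos (hs₀_pos.trans hs.1) _) (by nlinarith [hs.1])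

theorem stmt_3 (H T μ : ℝ) (hH : H ∈ Set.Ioo (0:ℝ) 1) (hT : 0 < T) (hμ : 0 < μ) :
    0 < ∫ s in (0:ℝ)..(μ*T), Real.exp (-s) * s ^ (2*H - 1) * (2*H*μ*T - (2*H+1)*s) := by
  have h := integral_exp_neg_mul_rpow_mul_sub_pos (by linarith [hH.1] : 0 < 2 * H) (mul_pos hμ hT)
  simpa only [mul_assoc] using h
end

section
/- Let H ∈ (0,1), H ≠ 1/2, let c ∈ [0,∞), λ > 0, and let α_k > 0, β_k ≥ 0 with β_k/α_k → c and Σ_{k=1}^∞ α_k^{2-2H} = ∞. Then for any Λ_L > 0, the ratio (Σ_{k=1}^N α_k²/(α_k Λ_L + β_k)^{2H}) / (Σ_{k=1}^N α_k²/(α_k λ + β_k)^{2H}) converges, as N → ∞, to ((λ + c)/(Λ_L + c))^{2H}. -/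
open Filter Finset Asymptotics Topology

/-!
Each summand factors as `α_k ^ (2 - 2H) * (Λ + β_k / α_k) ^ (-2H)`, and the second factor tends
to `(Λ + c) ^ (-2H)`. Since the weights `α_k ^ (2 - 2H)` have divergent sum, a weighted Cesàro
argument shows that both sums are asymptotic to `(Λ + c) ^ (-2H) * ∑ α_k ^ (2 - 2H)`, with `Λ = Λ_L`
and `Λ = λ` respectively; the common factor `∑ α_k ^ (2 - 2H)` cancels in the ratio.
-/

theorem Filter.Tendsto.weighted_cesaro_smul {E : Type*} [NormedAddCommGroup E] [NormedSpace ℝ E]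
    {a : ℕ → ℝ} {b : ℕ → E} {L : E} (hb : Tendsto b atTop (𝓝 L)) (ha : 0 ≤ a)
    (hdiv : Tendsto (fun n => ∑ i ∈ range n, a i) atTop atTop) :
    Tendsto (fun n => (∑ i ∈ range n, a i)⁻¹ • ∑ i ∈ range n, a i • b i) atTop (𝓝 L) := by
  have hsmall : (fun i => a i • (b i - L)) =o[atTop] a := by
    simpa using (isBigO_refl a atTop).smul_isLittleO
      ((isLittleO_one_iff ℝ).2 (tendsto_sub_nhds_zero_iff.2 hb))
  have hsum := (isBigO_refl (fun n => (∑ i ∈ range n, a i)⁻¹) atTop).smul_isLittleO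
    (hsmall.sum_range ha hdiv)
  rw [← tendsto_sub_nhds_zero_iff, ← isLittleO_one_iff ℝ]
  refine hsum.congr' ?_ ?_ <;> filter_upwards [hdiv.eventually_gt_atTop 0] with n hn
  · simp only [smul_sub, sum_sub_distrib, ← sum_smul, smul_smul, inv_mul_cancel₀ hn.ne', one_smul]
  · exact inv_mul_cancel₀ hn.ne'

theorem sum_Icc_one_eq_sum_range {M : Type*} [AddCommMonoid M] (f : ℕ → M) (n : ℕ) :
    ∑ k ∈ Icc 1 n, f k = ∑ i ∈ range n, f (i + 1) := by
  rw [range_eq_Ico, sum_Ico_add', ← Ico_add_one_right_eq_Icc]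

theorem sq_div_mul_add_rpow_eq {x y Λ : ℝ} (hx : 0 < x) (hΛ : 0 ≤ Λ + y / x) (p : ℝ) :
    x ^ 2 / (x * Λ + y) ^ p = x ^ (2 - p) * (Λ + y / x) ^ (-p) := by
  have hfactor : x * Λ + y = x * (Λ + y / x) := by field_simp
  rw [hfactor, Real.mul_rpow hx.le hΛ, Real.rpow_sub hx, Real.rpow_neg hΛ, Real.rpow_two]
  ring

theorem tendsto_sum_sq_div_mul_add_rpow_div_sum_rpow {α β : ℕ → ℝ} {c Λ p : ℝ}
    (hα : ∀ k, 0 < α k) (hβ : ∀ k, 0 ≤ β k) (hΛ : 0 ≤ Λ) (hΛc : 0 < Λ + c)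
    (hratio : Tendsto (fun k => β k / α k) atTop (𝓝 c))
    (hdiv : Tendsto (fun N => ∑ k ∈ Icc 1 N, α k ^ (2 - p)) atTop atTop) :
    Tendsto (fun N => (∑ k ∈ Icc 1 N, α k ^ 2 / (α k * Λ + β k) ^ p) /
        ∑ k ∈ Icc 1 N, α k ^ (2 - p)) atTop (𝓝 ((Λ + c) ^ (-p))) := by
  have hΛk (k : ℕ) : 0 ≤ Λ + β k / α k := add_nonneg hΛ (div_nonneg (hβ k) (hα k).le)
  have hlim : Tendsto (fun i => (Λ + β (i + 1) / α (i + 1)) ^ (-p)) atTop (𝓝 ((Λ + c) ^ (-p))) :=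
    (((tendsto_add_atTop_iff_nat 1).2 hratio).const_add Λ).rpow_const (Or.inl hΛc.ne')
  simp only [sum_Icc_one_eq_sum_range] at hdiv ⊢
  refine (hlim.weighted_cesaro_smul (fun i => Real.rpow_nonneg (hα _).le _) hdiv).congr fun N => ?_
  simp only [smul_eq_mul, inv_mul_eq_div, sq_div_mul_add_rpow_eq (hα _) (hΛk _)]

theorem stmt_17_general (H : ℝ)
    (c lam : ℝ) (hc : 0 ≤ c) (hlam : 0 < lam)
    (α β : ℕ → ℝ) (hα : ∀ k, 0 < α k) (hβ : ∀ k, 0 ≤ β k)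
    (hratio : Tendsto (fun k => β k / α k) atTop (nhds c))
    (hdiv : Tendsto (fun N => ∑ k ∈ Finset.Icc 1 N, (α k) ^ (2 - 2*H)) atTop atTop) :
    ∀ ΛL > (0:ℝ),
      Tendsto (fun N =>
          (∑ k ∈ Finset.Icc 1 N, (α k) ^ 2 / (α k * ΛL + β k) ^ (2*H)) /
          (∑ k ∈ Finset.Icc 1 N, (α k) ^ 2 / (α k * lam + β k) ^ (2*H)))
        atTop (nhds (((lam + c) / (ΛL + c)) ^ (2*H))) := by
  intro ΛL hΛL
  have hΛLc : 0 < ΛL + c := by positivity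
  have hlamc : 0 < lam + c := by positivity
  have hnum := tendsto_sum_sq_div_mul_add_rpow_div_sum_rpow hα hβ hΛL.le hΛLc hratio hdiv
  have hden := tendsto_sum_sq_div_mul_add_rpow_div_sum_rpow hα hβ hlam.le hlamc hratio hdiv
  have hlim := hnum.div hden (Real.rpow_pos_of_pos hlamc _).ne'
  rw [Real.rpow_neg hΛLc.le, Real.rpow_neg hlamc.le, inv_div_inv,
    ← Real.div_rpow hlamc.le hΛLc.le] at hlim
  refine hlim.congr' ?_
  filter_upwards [hdiv.eventually_gt_atTop 0] with N hN
  exact div_div_div_cancel_right₀ hN.ne' _ _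

theorem stmt_17 (H : ℝ) (hH : H ∈ Set.Ioo (0:ℝ) 1) (hne : H ≠ 1/2)
    (c lam : ℝ) (hc : 0 ≤ c) (hlam : 0 < lam)
    (α β : ℕ → ℝ) (hα : ∀ k, 0 < α k) (hβ : ∀ k, 0 ≤ β k)
    (hratio : Tendsto (fun k => β k / α k) atTop (nhds c))
    (hdiv : Tendsto (fun N => ∑ k ∈ Finset.Icc 1 N, (α k) ^ (2 - 2*H)) atTop atTop) :
    ∀ ΛL > (0:ℝ),
      Tendsto (fun N =>
          (∑ k ∈ Finset.Icc 1 N, (α k) ^ 2 / (α k * ΛL + β k) ^ (2*H)) /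
          (∑ k ∈ Finset.Icc 1 N, (α k) ^ 2 / (α k * lam + β k) ^ (2*H)))
        atTop (nhds (((lam + c) / (ΛL + c)) ^ (2*H))) :=
  stmt_17_general H c lam hc hlam α β hα hβ hratio hdiv
end
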